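/- arXiv:1903.10236 — 6 statements merged into one kernel-verified Lean document; each statement's English description precedes it below -/
import Mathlib

section
/- Let S be a locally inverse semigroup, let e, f ∈ E(S), and let a ∈ fSe (i.e., a = f*a = a*e). Then a has exactly one inverse in eSf; that is, there is a unique a' ∈ S with a*a'*a = a, a'*a*a' = a', e*a' = a', and a'*f = a'. -/
variable {S : Type*} [Semigroup S]

/-- An idempotent element. -/
def IsIdem (e : S) : Prop := e * e = e

/-- `a'` is an inverse of `a`. -/
def IsInv (a a' : S) : Prop := a * a' * a = a ∧ a' * a * a' = a'

/-- A regular semigroup: every element has an inverse. -/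
def Regular (S : Type*) [Semigroup S] : Prop := ∀ a : S, ∃ a', IsInv a a'

/-- A locally inverse semigroup: regular, and every local submonoid `eSe`
(for `e` idempotent) is inverse, i.e. every element of `eSe` has a unique
inverse lying in `eSe`. -/
def LocallyInverse (S : Type*) [Semigroup S] : Prop :=
  Regular S ∧ ∀ e : S, IsIdem e → ∀ x : S, (e * x = x ∧ x * e = x) →
    ∃! x' : S, (e * x' = x' ∧ x' * e = x') ∧ IsInv x x'

/-- Green's relation R: same principal right ideal. -/
def RRel (a b : S) : Prop :=
  (insert a {x | ∃ s, x = a * s} : Set S) = insert b {x | ∃ s, x = b * s}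

/-- Green's relation L: same principal left ideal. -/
def LRel (a b : S) : Prop :=
  (insert a {x | ∃ s, x = s * a} : Set S) = insert b {x | ∃ s, x = s * b}

/-- Green's relation D. -/
def DRel (a b : S) : Prop := ∃ c : S, RRel a c ∧ LRel c b

/-- `g` is the sandwich idempotent `e ∧ f` of the idempotents `e`, `f`. -/
def IsSandwich (e f g : S) : Prop :=
  IsIdem g ∧ ∀ h : S, IsIdem h → ((e * h = h ∧ h * f = h) ↔ (g * h = h ∧ h * g = h))

/-- The natural partial order on a regular semigroup. -/
def NatLe (a b : S) : Prop :=
  ∃ e f : S, IsIdem e ∧ IsIdem f ∧ a = e * b ∧ a = b * f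

lemma strrw {a b c : S} (h : a * b = c) (t : S) : a * (b * t) = c * t := by
  rw [← mul_assoc, h]

lemma idem_mul (hS : LocallyInverse S) (e : S) (he : IsIdem e)
    (u v : S) (hu : IsIdem u) (hv : IsIdem v)
    (heu : e * u = u) (hue : u * e = u) (hev : e * v = v) (hve : v * e = v) :
    IsIdem (u * v) := by
  have hu' : u * u = u := hu
  have hv' : v * v = v := hv
  obtain ⟨x, ⟨⟨hex, hxe⟩, hinv1, hinv2⟩, huniq⟩ :=
    hS.2 e he (u * v) ⟨by rw [← mul_assoc, heu], by rw [mul_assoc, hve]⟩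
  have hinv1N : u * (v * (x * (u * v))) = u * v := by
    simpa only [mul_assoc] using hinv1
  have hinv2e : ∀ t : S, x * (u * (v * (x * t))) = x * t := fun t => by
    have := congrArg (· * t) hinv2
    simpa only [mul_assoc] using this
  have hkey : v * x * u = x := by
    apply huniq
    refine ⟨⟨?_, ?_⟩, ?_, ?_⟩
    · simp only [mul_assoc, strrw hev]
    · simp only [mul_assoc, hue]
    · simp only [mul_assoc, strrw hv', strrw hu', hinv1N]
    · simp only [mul_assoc, strrw hv', strrw hu', hinv2e]
  have haux : (v * x * u) * (v * x * u) = v * x * u := by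
    simp only [mul_assoc, hinv2e]
  have hxx : x * x = x := by rw [← hkey]; exact haux
  obtain ⟨y, hy, huniq2⟩ := hS.2 e he x ⟨hex, hxe⟩
  have h1 : u * v = y := huniq2 (u * v)
    ⟨⟨by rw [← mul_assoc, heu], by rw [mul_assoc, hve]⟩, hinv2, hinv1⟩
  have h2 : x = y := huniq2 x ⟨⟨hex, hxe⟩, by rw [hxx, hxx], by rw [hxx, hxx]⟩
  show u * v * (u * v) = u * v
  rw [h1, ← h2, hxx]

lemma idem_comm (hS : LocallyInverse S) (e : S) (he : IsIdem e)
    (u v : S) (hu : IsIdem u) (hv : IsIdem v)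
    (heu : e * u = u) (hue : u * e = u) (hev : e * v = v) (hve : v * e = v) :
    u * v = v * u := by
  have hu' : u * u = u := hu
  have hv' : v * v = v := hv
  have huv : (u * v) * (u * v) = u * v := idem_mul hS e he u v hu hv heu hue hev hve
  have hvu : (v * u) * (v * u) = v * u := idem_mul hS e he v u hv hu hev hve heu hue
  have huvN : u * (v * (u * v)) = u * v := by simpa only [mul_assoc] using huv
  have hvuN : v * (u * (v * u)) = v * u := by simpa only [mul_assoc] using hvu
  obtain ⟨y, hy, huniq⟩ := hS.2 e he (u * v)
    ⟨by rw [← mul_assoc, heu], by rw [mul_assoc, hve]⟩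
  have h1 : u * v = y := huniq (u * v)
    ⟨⟨by rw [← mul_assoc, heu], by rw [mul_assoc, hve]⟩, by rw [huv, huv], by rw [huv, huv]⟩
  have h2 : v * u = y := by
    apply huniq
    refine ⟨⟨?_, ?_⟩, ?_, ?_⟩
    · simp only [mul_assoc, strrw hev]
    · simp only [mul_assoc, hue]
    · simp only [mul_assoc, strrw hv', strrw hu', huvN]
    · simp only [mul_assoc, strrw hu', strrw hv', hvuN]
  rw [h1, h2]

theorem unique_inverse_in_eSf (hS : LocallyInverse S) (e f a : S)
    (he : IsIdem e) (hf : IsIdem f) (ha : f * a = a ∧ a * e = a) :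
    ∃! a' : S, IsInv a a' ∧ e * a' = a' ∧ a' * f = a' := by
  obtain ⟨hfa, hae⟩ := ha
  have he' : e * e = e := he
  have hf' : f * f = f := hf
  obtain ⟨b, hb1, hb2⟩ := hS.1 a
  have hb1N : a * (b * a) = a := by simpa only [mul_assoc] using hb1
  have hb2e : ∀ t : S, b * (a * (b * t)) = b * t := fun t => by
    have := congrArg (· * t) hb2
    simpa only [mul_assoc] using this
  refine ⟨e * b * f, ⟨⟨?_, ?_⟩, ?_, ?_⟩, ?_⟩
  · simp only [mul_assoc, strrw hae, hfa, hb1N]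
  · simp only [mul_assoc, strrw hfa, strrw hae, hb2e]
  · simp only [mul_assoc, strrw he']
  · simp only [mul_assoc, hf']
  · rintro c ⟨⟨hc1, hc2⟩, hec, hcf⟩
    have key : ∀ p q : S, p * a * p = p → a * p * a = a → e * p = p → p * f = p →
        q * a * q = q → a * q * a = a → e * q = q → q * f = q → p = q := by
      intro p q hp1 hp2 hep hpf hq1 hq2 heq hqf
      have hp1e : ∀ t : S, p * (a * (p * t)) = p * t := fun t => by
        have := congrArg (· * t) hp1; simpa only [mul_assoc] using this
      have hp2e : ∀ t : S, a * (p * (a * t)) = a * t := fun t => by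
        have := congrArg (· * t) hp2; simpa only [mul_assoc] using this
      have hq1e : ∀ t : S, q * (a * (q * t)) = q * t := fun t => by
        have := congrArg (· * t) hq1; simpa only [mul_assoc] using this
      have hq2e : ∀ t : S, a * (q * (a * t)) = a * t := fun t => by
        have := congrArg (· * t) hq2; simpa only [mul_assoc] using this
      have hp2N : a * (p * a) = a := by simpa only [mul_assoc] using hp2
      have hq2N : a * (q * a) = a := by simpa only [mul_assoc] using hq2
      have hp1N : p * (a * p) = p := by simpa only [mul_assoc] using hp1
      have hq1N : q * (a * q) = q := by simpa only [mul_assoc] using hq1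
      have hpaI : IsIdem (p * a) := by
        show (p * a) * (p * a) = p * a
        simp only [mul_assoc, hp2N]
      have hqaI : IsIdem (q * a) := by
        show (q * a) * (q * a) = q * a
        simp only [mul_assoc, hq2N]
      have hapI : IsIdem (a * p) := by
        show (a * p) * (a * p) = a * p
        simp only [mul_assoc, hp1N]
      have haqI : IsIdem (a * q) := by
        show (a * q) * (a * q) = a * q
        simp only [mul_assoc, hq1N]
      have hcomm1 : (p * a) * (q * a) = (q * a) * (p * a) :=
        idem_comm hS e he (p * a) (q * a) hpaI hqaI
          (by rw [← mul_assoc, hep]) (by rw [mul_assoc, hae])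
          (by rw [← mul_assoc, heq]) (by rw [mul_assoc, hae])
      have hcomm2 : (a * p) * (a * q) = (a * q) * (a * p) :=
        idem_comm hS f hf (a * p) (a * q) hapI haqI
          (by rw [← mul_assoc, hfa]) (by rw [mul_assoc, hpf])
          (by rw [← mul_assoc, hfa]) (by rw [mul_assoc, hqf])
      have step1 : p = q * a * p := by
        calc p = p * a * p := hp1.symm
        _ = (p * a) * (q * a) * p := by simp only [mul_assoc, hq2e]
        _ = (q * a) * (p * a) * p := by rw [hcomm1]
        _ = q * a * p := by simp only [mul_assoc, hp1e, hp1N]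
      have step2 : q = p * a * q := by
        calc q = q * a * q := hq1.symm
        _ = (q * a) * (p * a) * q := by simp only [mul_assoc, hp2e]
        _ = (p * a) * (q * a) * q := by rw [← hcomm1]
        _ = p * a * q := by simp only [mul_assoc, hq1e, hq1N]
      calc p = q * a * p := step1
      _ = (p * a * q) * a * p := by rw [← step2]
      _ = p * ((a * q) * (a * p)) := by simp only [mul_assoc]
      _ = p * ((a * p) * (a * q)) := by rw [hcomm2]
      _ = p * a * q := by simp only [mul_assoc, hp1e]
      _ = q := step2.symm
    apply key c (e * b * f) hc2 hc1 hec hcf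
    · simp only [mul_assoc, strrw hfa, strrw hae, hb2e]
    · simp only [mul_assoc, strrw hae, hfa, hb1N]
    · simp only [mul_assoc, strrw he']
    · simp only [mul_assoc, hf']
end

section
/- Let S be a locally inverse semigroup, a ∈ S, e ∈ E(S), and let a' be an inverse of a with a'*e = a'. Then for every inverse a₁' of a that is R-related to a' and every idempotent f with f*a = a, one has a' = a₁' * (f ∧ e), where f ∧ e denotes the sandwich idempotent of f and e. -/
variable {S : Type*} [Semigroup S]

lemma aux_assoc2 {a b c : S} (h : a * b = c) (y : S) : a * (b * y) = c * y := by
  rw [← mul_assoc, h]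

/-- In a locally inverse semigroup, the product of two idempotents of a
local submonoid `gSg` is idempotent. -/
lemma aux_pq_idem (hS : LocallyInverse S) {g p q : S} (hgi : IsIdem g)
    (hp : IsIdem p) (hq : IsIdem q)
    (hgp : g * p = p) (hpg : p * g = p) (hgq : g * q = q) (hqg : q * g = q) :
    IsIdem (p * q) := by
  obtain ⟨x', hx'⟩ := hS.1 (p * q)
  have hp' : ∀ y : S, p * (p * y) = p * y := fun y => aux_assoc2 hp y
  have hq' : ∀ y : S, q * (q * y) = q * y := fun y => aux_assoc2 hq y
  have hx2 : x' * (p * q) * x' = x' := hx'.2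
  have hx2' : ∀ y : S, x' * (p * (q * (x' * y))) = x' * y := fun y => by
    have := aux_assoc2 hx2 y
    simpa only [mul_assoc] using this
  set x := q * (x' * p) with hxdef
  have hxx : x * x = x := by
    show (q * (x' * p)) * (q * (x' * p)) = q * (x' * p)
    simp only [mul_assoc]
    rw [hx2' p]
  have hgx : g * x = x := by
    show g * (q * (x' * p)) = q * (x' * p)
    rw [← mul_assoc, hgq]
  have hxg : x * g = x := by
    show (q * (x' * p)) * g = q * (x' * p)
    simp only [mul_assoc]
    rw [hpg]
  have hinv1 : x * (p * q) * x = x := by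
    show (q * (x' * p)) * (p * q) * (q * (x' * p)) = q * (x' * p)
    simp only [mul_assoc]
    rw [hp', hq', hx2' p]
  have hinv2 : (p * q) * x * (p * q) = p * q := by
    have hx1 : (p * q) * x' * (p * q) = p * q := hx'.1
    show (p * q) * (q * (x' * p)) * (p * q) = p * q
    calc (p * q) * (q * (x' * p)) * (p * q)
        = p * (q * (q * (x' * (p * (p * q))))) := by simp only [mul_assoc]
      _ = p * (q * (x' * (p * q))) := by rw [hq', hp' q]
      _ = p * q := by
          have := aux_assoc2 hx1 q
          simp only [mul_assoc] at hx1 ⊢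
          rw [hx1]
  obtain ⟨w, _, huniq⟩ := hS.2 g hgi x ⟨hgx, hxg⟩
  have h1 : x = w := huniq x ⟨⟨hgx, hxg⟩, by
    constructor <;> rw [hxx, hxx]⟩
  have hgpq : g * (p * q) = p * q := by rw [← mul_assoc, hgp]
  have hpqg : (p * q) * g = p * q := by rw [mul_assoc, hqg]
  have h2 : p * q = w := huniq (p * q) ⟨⟨hgpq, hpqg⟩, ⟨hinv1, hinv2⟩⟩
  have hpqx : p * q = x := by rw [h2, ← h1]
  show (p * q) * (p * q) = p * q
  rw [hpqx, hxx]

/-- Idempotents of a local submonoid of a locally inverse semigroup commute. -/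
lemma aux_comm (hS : LocallyInverse S) {g p q : S} (hgi : IsIdem g)
    (hp : IsIdem p) (hq : IsIdem q)
    (hgp : g * p = p) (hpg : p * g = p) (hgq : g * q = q) (hqg : q * g = q) :
    p * q = q * p := by
  have h1 : IsIdem (p * q) := aux_pq_idem hS hgi hp hq hgp hpg hgq hqg
  have h2 : IsIdem (q * p) := aux_pq_idem hS hgi hq hp hgq hqg hgp hpg
  have hgpq : g * (p * q) = p * q := by rw [← mul_assoc, hgp]
  have hpqg : (p * q) * g = p * q := by rw [mul_assoc, hqg]
  have hgqp : g * (q * p) = q * p := by rw [← mul_assoc, hgq]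
  have hqpg : (q * p) * g = q * p := by rw [mul_assoc, hpg]
  obtain ⟨w, _, huniq⟩ := hS.2 g hgi (p * q) ⟨hgpq, hpqg⟩
  have e1 : p * q = w := huniq (p * q) ⟨⟨hgpq, hpqg⟩, by
    constructor <;> rw [h1, h1]⟩
  have e2 : q * p = w := by
    refine huniq (q * p) ⟨⟨hgqp, hqpg⟩, ?_, ?_⟩
    · calc (p * q) * (q * p) * (p * q)
          = p * (q * (q * (p * (p * q)))) := by simp only [mul_assoc]
        _ = p * (q * (p * q)) := by rw [aux_assoc2 hq, aux_assoc2 hp]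
        _ = (p * q) * (p * q) := by simp only [mul_assoc]
        _ = p * q := h1
    · calc (q * p) * (p * q) * (q * p)
          = q * (p * (p * (q * (q * p)))) := by simp only [mul_assoc]
        _ = q * (p * (q * p)) := by rw [aux_assoc2 hp, aux_assoc2 hq]
        _ = (q * p) * (q * p) := by simp only [mul_assoc]
        _ = q * p := h2
  rw [e1, ← e2]

theorem inverse_eq_inverse_mul_sandwich (hS : LocallyInverse S)
    (a e a' : S) (he : IsIdem e) (ha' : IsInv a a') (ha'e : a' * e = a')
    (a₁' : S) (ha₁' : IsInv a a₁') (hR : RRel a' a₁')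
    (f : S) (hf : IsIdem f) (hfa : f * a = a)
    (g : S) (hg : IsSandwich f e g) : a' = a₁' * g := by
  obtain ⟨haa'a, ha'aa'⟩ := ha'
  obtain ⟨haa₁a, ha₁aa₁⟩ := ha₁'
  -- From `a' R a₁'` we get `a' = a₁' * (a * a')`.
  have hmem : a' ∈ (insert a₁' {x | ∃ s, x = a₁' * s} : Set S) := by
    rw [← hR]; exact Set.mem_insert _ _
  have E1 : a₁' * (a * a') = a' := by
    rcases hmem with h | ⟨s, hs⟩
    · rw [h, ← mul_assoc]
      exact ha₁aa₁
    · rw [hs]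
      calc a₁' * (a * (a₁' * s)) = (a₁' * a * a₁') * s := by simp only [mul_assoc]
        _ = a₁' * s := by rw [ha₁aa₁]
  -- `a*a'` is an idempotent below the sandwich idempotent `g`.
  have haa' : IsIdem (a * a') := by
    show (a * a') * (a * a') = a * a'
    calc (a * a') * (a * a') = (a * a' * a) * a' := by simp only [mul_assoc]
      _ = a * a' := by rw [haa'a]
  have hfa' : f * (a * a') = a * a' := by rw [← mul_assoc, hfa]
  have ha'e2 : (a * a') * e = a * a' := by rw [mul_assoc, ha'e]
  have hsw := (hg.2 (a * a') haa').mp ⟨hfa', ha'e2⟩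
  -- `g * (a * a₁') = a * a₁'`.
  have C : g * (a * a₁') = a * a₁' := by
    calc g * (a * a₁') = g * ((a * a' * a) * a₁') := by rw [haa'a]
      _ = (g * (a * a')) * (a * a₁') := by simp only [mul_assoc]
      _ = (a * a') * (a * a₁') := by rw [hsw.1]
      _ = (a * a' * a) * a₁' := by simp only [mul_assoc]
      _ = a * a₁' := by rw [haa'a]
  set p := (a * a₁') * g with hpdef
  have hpidem : IsIdem p := by
    show ((a * a₁') * g) * ((a * a₁') * g) = (a * a₁') * g
    calc ((a * a₁') * g) * ((a * a₁') * g)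
        = (a * a₁') * ((g * (a * a₁')) * g) := by simp only [mul_assoc]
      _ = (a * a₁') * ((a * a₁') * g) := by rw [C]
      _ = ((a * (a₁' * a)) * a₁') * g := by simp only [mul_assoc]
      _ = (a * a₁') * g := by rw [← mul_assoc, haa₁a]
  have hgp : g * p = p := by
    show g * ((a * a₁') * g) = (a * a₁') * g
    rw [← mul_assoc, C]
  have hpg : p * g = p := by
    show ((a * a₁') * g) * g = (a * a₁') * g
    rw [mul_assoc, hg.1]
  have comm : p * (a * a') = (a * a') * p :=
    aux_comm hS hg.1 hpidem haa' hgp hpg hsw.1 hsw.2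
  have hp1 : p * (a * a') = a * a' := by
    show ((a * a₁') * g) * (a * a') = a * a'
    calc ((a * a₁') * g) * (a * a') = (a * a₁') * (g * (a * a')) := by
          simp only [mul_assoc]
      _ = (a * a₁') * (a * a') := by rw [hsw.1]
      _ = a * (a₁' * (a * a')) := by simp only [mul_assoc]
      _ = a * a' := by rw [E1]
  have hp2 : (a * a') * p = p := by
    show (a * a') * ((a * a₁') * g) = (a * a₁') * g
    calc (a * a') * ((a * a₁') * g) = ((a * a' * a) * a₁') * g := by
          simp only [mul_assoc]
      _ = (a * a₁') * g := by rw [haa'a]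
  have hpeq : p = a * a' := by rw [← hp1, comm, hp2]
  calc a' = a₁' * (a * a') := E1.symm
    _ = a₁' * p := by rw [hpeq]
    _ = a₁' * ((a * a₁') * g) := rfl
    _ = (a₁' * a * a₁') * g := by simp only [mul_assoc]
    _ = a₁' * g := by rw [ha₁aa₁]
end

section
/- Green's Lemma (right translation form): Let S be a semigroup and s, t ∈ S with s*t R-related to s. Then the map φ_t : L_s → L_{s*t}, u ↦ u*t, is a well-defined bijection from the L-class of s onto the L-class of s*t, and it preserves R-classes: u R-related to φ_t(u) for every u ∈ L_s. -/
variable {S : Type*} [Semigroup S]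

lemma lmem_of_LRel {a b : S} (h : LRel a b) : a = b ∨ ∃ c, a = c * b := by
  have : a ∈ (insert a {x | ∃ s, x = s * a} : Set S) := Set.mem_insert _ _
  rw [h] at this
  simpa using this

lemma rmem_of_RRel {a b : S} (h : RRel a b) : a = b ∨ ∃ c, a = b * c := by
  have : a ∈ (insert a {x | ∃ s, x = a * s} : Set S) := Set.mem_insert _ _
  rw [h] at this
  simpa using this

lemma lmem_trans {x a b : S} (h1 : x = a ∨ ∃ c, x = c * a)
    (h2 : a = b ∨ ∃ c, a = c * b) : x = b ∨ ∃ c, x = c * b := by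
  rcases h1 with rfl | ⟨c, rfl⟩
  · exact h2
  · rcases h2 with rfl | ⟨d, rfl⟩
    · exact Or.inr ⟨c, rfl⟩
    · exact Or.inr ⟨c * d, (mul_assoc _ _ _).symm⟩

lemma rmem_trans {x a b : S} (h1 : x = a ∨ ∃ c, x = a * c)
    (h2 : a = b ∨ ∃ c, a = b * c) : x = b ∨ ∃ c, x = b * c := by
  rcases h1 with rfl | ⟨c, rfl⟩
  · exact h2
  · rcases h2 with rfl | ⟨d, rfl⟩
    · exact Or.inr ⟨c, rfl⟩
    · exact Or.inr ⟨d * c, mul_assoc _ _ _⟩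

lemma LRel_of_mem {a b : S} (h1 : a = b ∨ ∃ c, a = c * b)
    (h2 : b = a ∨ ∃ c, b = c * a) : LRel a b := by
  ext x
  simp only [Set.mem_insert_iff, Set.mem_setOf_eq]
  exact ⟨fun hx => lmem_trans hx h1, fun hx => lmem_trans hx h2⟩

lemma RRel_of_mem {a b : S} (h1 : a = b ∨ ∃ c, a = b * c)
    (h2 : b = a ∨ ∃ c, b = a * c) : RRel a b := by
  ext x
  simp only [Set.mem_insert_iff, Set.mem_setOf_eq]
  exact ⟨fun hx => rmem_trans hx h1, fun hx => rmem_trans hx h2⟩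

lemma LRel_mul_right {u v : S} (t : S) (h : LRel u v) : LRel (u * t) (v * t) := by
  have h1 := lmem_of_LRel h
  have h2 := lmem_of_LRel (h.symm)
  refine LRel_of_mem ?_ ?_
  · rcases h1 with rfl | ⟨c, rfl⟩
    · exact Or.inl rfl
    · exact Or.inr ⟨c, mul_assoc _ _ _⟩
  · rcases h2 with rfl | ⟨c, rfl⟩
    · exact Or.inl rfl
    · exact Or.inr ⟨c, mul_assoc _ _ _⟩

lemma LRel_fix {a b : S} (hab : a * b = a) {w : S} (hw : LRel w a) : w * b = w := by
  rcases lmem_of_LRel hw with rfl | ⟨c, rfl⟩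
  · exact hab
  · rw [mul_assoc, hab]

theorem greens_lemma_right_translation (s t : S) (h : RRel (s * t) s) :
    (∀ u : S, LRel u s → LRel (u * t) (s * t)) ∧
    (∀ u v : S, LRel u s → LRel v s → u * t = v * t → u = v) ∧
    (∀ w : S, LRel w (s * t) → ∃ u : S, LRel u s ∧ u * t = w) ∧
    (∀ u : S, LRel u s → RRel u (u * t)) := by
  rcases rmem_of_RRel (h.symm) with hst | ⟨t', ht'⟩
  · -- s = s * t : the translation is the identity on L_s
    have key : ∀ u : S, LRel u s → u * t = u := fun u hu => LRel_fix hst.symm hu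
    refine ⟨fun u hu => ?_, fun u v hu hv huv => ?_, fun w hw => ?_, fun u hu => ?_⟩
    · rw [key u hu, ← hst]; exact hu
    · rw [← key u hu, ← key v hv, huv]
    · rw [← hst] at hw
      exact ⟨w, hw, key w hw⟩
    · rw [key u hu]; rfl
  · -- s = s * t * t'
    have key : ∀ u : S, LRel u s → u * t * t' = u := by
      intro u hu
      have : u * (t * t') = u := LRel_fix (by rw [← mul_assoc, ← ht']) hu
      rwa [← mul_assoc] at this
    have keyw : ∀ w : S, LRel w (s * t) → w * t' * t = w := by
      intro w hw
      have : w * (t' * t) = w := LRel_fix (by rw [← mul_assoc, ← ht']) hw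
      rwa [← mul_assoc] at this
    refine ⟨fun u hu => LRel_mul_right t hu, fun u v hu hv huv => ?_,
      fun w hw => ?_, fun u hu => ?_⟩
    · rw [← key u hu, ← key v hv, huv]
    · refine ⟨w * t', ?_, keyw w hw⟩
      have := LRel_mul_right t' hw
      rwa [← ht'] at this
    · exact RRel_of_mem (Or.inr ⟨t', (key u hu).symm⟩) (Or.inr ⟨t, rfl⟩)
end

section
/- Let S be a regular semigroup and s ∈ S. Then s belongs to the subsemigroup generated by E(S) if and only if there exist n ≥ 1 and idempotents e₁, …, eₙ, f₁, …, f_{n−1} ∈ E(S) such that s R e₁, eᵢ L fᵢ, fᵢ R e_{i+1} (for 1 ≤ i ≤ n−1), eₙ L s, and s = e₁*f₁*e₂*⋯*f_{n−1}*eₙ. -/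
/-!
Write a product of idempotents as `s = x₀ x₁ ⋯ x_N` and let `s'` be an inverse of `s`. With the
prefixes `pᵢ = x₀ ⋯ xᵢ` and suffixes `qᵢ = xᵢ ⋯ x_N`, FitzGerald's elements
`eᵢ = qᵢ s' pᵢ` and `fᵢ = qᵢ₊₁ s' pᵢ` are idempotent because `pᵢ qᵢ = pᵢ qᵢ₊₁ = s`, and
`eᵢ = xᵢ fᵢ`, `fᵢ = fᵢ eᵢ`, `eᵢ₊₁ = fᵢ xᵢ₊₁`, `fᵢ = eᵢ₊₁ fᵢ` give the `L`- and `R`-links.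
The product `e₀ f₀ e₁ ⋯ fᵢ eᵢ₊₁` telescopes to `s s' pᵢ₊₁`, which is `s s' s = s` at the end.
-/

variable {S : Type*} [Semigroup S]

lemma rRel_of_eq_mul {a b : S} (u v : S) (hab : a = b * u) (hba : b = a * v) : RRel a b := by
  have subset : ∀ {c d w : S}, c = d * w →
      (insert c {x | ∃ t, x = c * t} : Set S) ⊆ insert d {x | ∃ t, x = d * t} := by
    rintro c d w rfl _ (rfl | ⟨t, rfl⟩)
    · exact Or.inr ⟨w, rfl⟩
    · exact Or.inr ⟨w * t, mul_assoc d w t⟩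
  exact (subset hab).antisymm (subset hba)

lemma lRel_of_eq_mul {a b : S} (u v : S) (hab : a = u * b) (hba : b = v * a) : LRel a b := by
  have subset : ∀ {c d w : S}, c = w * d →
      (insert c {x | ∃ t, x = t * c} : Set S) ⊆ insert d {x | ∃ t, x = t * d} := by
    rintro c d w rfl _ (rfl | ⟨t, rfl⟩)
    · exact Or.inr ⟨w, rfl⟩
    · exact Or.inr ⟨t * w, (mul_assoc t w d).symm⟩
  exact (subset hab).antisymm (subset hba)

section Sandwich

variable {s s' p q : S}

lemma IsInv.inv_mul_inv_assoc (hs : IsInv s s') (t : S) : s' * (s * (s' * t)) = s' * t := by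
  rw [← mul_assoc, ← mul_assoc, hs.2]

lemma isIdem_mul_inv_mul (hs : IsInv s s') (hpq : p * q = s) : IsIdem (q * s' * p) := by
  have hpq_assoc (t : S) : p * (q * t) = s * t := by rw [← mul_assoc, hpq]
  simp only [IsIdem, mul_assoc, hpq_assoc, hs.inv_mul_inv_assoc]

lemma lRel_mul_inv_mul {x q' : S} (hs : IsInv s s') (hq : q = x * q') (hpq : p * q = s) :
    LRel (q * s' * p) (q' * s' * p) := by
  have hpq_assoc (t : S) : p * (q * t) = s * t := by rw [← mul_assoc, hpq]
  refine lRel_of_eq_mul x (q' * s' * p) (by rw [hq]; simp only [mul_assoc]) ?_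
  simp only [mul_assoc, hpq_assoc, hs.inv_mul_inv_assoc]

lemma rRel_mul_inv_mul {x p' : S} (hs : IsInv s s') (hp : p = p' * x) (hpq : p * q = s) :
    RRel (q * s' * p') (q * s' * p) := by
  have hpq_assoc (t : S) : p * (q * t) = s * t := by rw [← mul_assoc, hpq]
  refine rRel_of_eq_mul (q * s' * p') x ?_ (by rw [hp]; simp only [mul_assoc])
  simp only [mul_assoc, hpq_assoc, hs.inv_mul_inv_assoc]

lemma rRel_self_mul_inv_mul (hs : IsInv s s') (hp : p * s = s) : RRel s (s * s' * p) :=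
  rRel_of_eq_mul s (s' * p) (by rw [mul_assoc _ p, hp, hs.1]) (mul_assoc s s' p)

lemma lRel_mul_inv_mul_self (hs : IsInv s s') (hq : s * q = s) : LRel (q * s' * s) s :=
  lRel_of_eq_mul (q * s') s rfl (by rw [← mul_assoc, ← mul_assoc, hq, hs.1])

end Sandwich

/-- `segProd x i k = x i * x (i + 1) * ⋯ * x (i + k)`, a product of `k + 1` factors. -/
def segProd (x : ℕ → S) : ℕ → ℕ → S
  | i, 0 => x i
  | i, k + 1 => x i * segProd x (i + 1) k

lemma segProd_mul_segProd (x : ℕ → S) (i a b : ℕ) :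
    segProd x i a * segProd x (i + a + 1) b = segProd x i (a + b + 1) := by
  induction a generalizing i with
  | zero => rw [Nat.zero_add, Nat.add_zero]; rfl
  | succ a ih =>
    rw [show a + 1 + b + 1 = a + b + 1 + 1 by omega, segProd, segProd, ← ih,
      show i + (a + 1) + 1 = i + 1 + a + 1 by omega, mul_assoc]

lemma segProd_succ_right (x : ℕ → S) (i k : ℕ) :
    segProd x i (k + 1) = segProd x i k * x (i + k + 1) :=
  (segProd_mul_segProd x i k 0).symm

lemma segProd_mul_last {x : ℕ → S} (hx : ∀ i, IsIdem (x i)) (i k : ℕ) :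
    segProd x i k * x (i + k) = segProd x i k := by
  cases k with
  | zero => exact hx i
  | succ k => rw [segProd_succ_right, mul_assoc, ← add_assoc, hx]

lemma segProd_congr {x y : ℕ → S} {i i' k : ℕ} (h : ∀ j ≤ k, x (i + j) = y (i' + j)) :
    segProd x i k = segProd y i' k := by
  induction k generalizing i i' with
  | zero => exact h 0 le_rfl
  | succ k ih =>
    have hfirst : x i = y i' := h 0 (Nat.zero_le _)
    have hrest : segProd x (i + 1) k = segProd y (i' + 1) k :=
      ih fun j hj => by simpa only [add_assoc, add_comm 1] using h (j + 1) (by omega)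
    simp only [segProd, hfirst, hrest]

lemma exists_segProd_eq_of_mem_closure {s : S}
    (h : s ∈ Subsemigroup.closure {x : S | IsIdem x}) :
    ∃ N, ∃ x : ℕ → S, (∀ i, IsIdem (x i)) ∧ s = segProd x 0 N := by
  induction h using Subsemigroup.closure_induction with
  | mem e he => exact ⟨0, fun _ => e, fun _ => he, rfl⟩
  | mul b c _ _ hb hc =>
    obtain ⟨n, x, hx, rfl⟩ := hb
    obtain ⟨m, y, hy, rfl⟩ := hc
    refine ⟨n + m + 1, fun k => if k ≤ n then x k else y (k - (n + 1)),
      fun k => by dsimp only; split <;> simp only [hx, hy], ?_⟩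
    rw [← segProd_mul_segProd]
    congr 1 <;> apply segProd_congr <;> intro j hj
    · simp only [if_pos (show 0 + j ≤ n by omega)]
    · simp only [if_neg (show ¬0 + n + 1 + j ≤ n by omega)]
      congr 1
      omega

lemma Subsemigroup.list_foldl_mul_mem {M : Type*} [Mul M] (T : Subsemigroup M) {a : M}
    {l : List M} (ha : a ∈ T) (hl : ∀ y ∈ l, y ∈ T) : l.foldl (· * ·) a ∈ T := by
  induction l generalizing a with
  | nil => exact ha
  | cons y l ih =>
    exact ih (T.mul_mem ha (hl y List.mem_cons_self)) fun z hz => hl z (List.mem_cons_of_mem y hz)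

def HasIdempotentChain (s : S) (n : ℕ) : Prop :=
  ∃ e : Fin (n + 1) → S, ∃ f : Fin n → S,
    (∀ i, IsIdem (e i)) ∧ (∀ i, IsIdem (f i)) ∧
    RRel s (e 0) ∧
    (∀ i : Fin n, LRel (e i.castSucc) (f i)) ∧
    (∀ i : Fin n, RRel (f i) (e i.succ)) ∧
    LRel (e (Fin.last n)) s ∧
    s = List.foldl (· * ·) (e 0) (List.ofFn fun i : Fin n => f i * e i.succ)

theorem hasIdempotentChain_of_factorization {s s' : S} (hs : IsInv s s') {N : ℕ}
    {x p q : ℕ → S} (hp : ∀ i < N, p (i + 1) = p i * x (i + 1))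
    (hq : ∀ i < N, q i = x i * q (i + 1)) (hpq : ∀ i ≤ N, p i * q i = s)
    (hpq_succ : ∀ i < N, p i * q (i + 1) = s) (hq0 : q 0 = s) (hpN : p N = s) :
    HasIdempotentChain s N := by
  have telescope : ∀ k ≤ N, List.foldl (· * ·) (q 0 * s' * p 0)
      (List.ofFn fun i : Fin k => q (i + 1) * s' * p i * (q (i + 1) * s' * p (i + 1))) =
        s * s' * p k := by
    intro k
    induction k with
    | zero => intro _; simp [hq0]
    | succ k ih =>
      intro hk
      have hpq_assoc (t : S) : p k * (q (k + 1) * t) = s * t := by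
        rw [← mul_assoc, hpq_succ k hk]
      simp only [List.ofFn_succ', Fin.val_castSucc, Fin.val_last, List.concat_eq_append,
        List.foldl_append, List.foldl_cons, List.foldl_nil]
      rw [ih (by omega)]
      simp only [mul_assoc, hpq_assoc, hs.inv_mul_inv_assoc]
  refine ⟨fun i => q i * s' * p i, fun i => q (i + 1) * s' * p i,
    fun i => isIdem_mul_inv_mul hs (hpq i (by omega)),
    fun i => isIdem_mul_inv_mul hs (hpq_succ i i.isLt), ?_,
    fun i => lRel_mul_inv_mul hs (hq i i.isLt) (hpq i i.isLt.le),
    fun i => rRel_mul_inv_mul hs (hp i i.isLt) (hpq (i + 1) i.isLt), ?_, ?_⟩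
  · simp only [Fin.val_zero, hq0]
    exact rRel_self_mul_inv_mul hs (by simpa only [hq0] using hpq 0 (Nat.zero_le N))
  · simp only [Fin.val_last, hpN]
    exact lRel_mul_inv_mul_self hs (by simpa only [hpN] using hpq N le_rfl)
  · simp only [Fin.val_zero, Fin.val_succ, telescope N le_rfl, hpN, hs.1]

theorem hasIdempotentChain_segProd {x : ℕ → S} (hx : ∀ i, IsIdem (x i)) {N : ℕ} {s' : S}
    (hs : IsInv (segProd x 0 N) s') : HasIdempotentChain (segProd x 0 N) N := by
  have prefix_mul_self (i : ℕ) : segProd x 0 i * x i = segProd x 0 i := by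
    simpa only [zero_add] using segProd_mul_last hx 0 i
  have suffix_eq (i : ℕ) (hi : i < N) :
      segProd x i (N - i) = x i * segProd x (i + 1) (N - (i + 1)) := by
    obtain ⟨k, rfl⟩ : ∃ k, N = i + 1 + k := ⟨N - (i + 1), by omega⟩
    rw [show i + 1 + k - i = k + 1 by omega, show i + 1 + k - (i + 1) = k by omega, segProd]
  have split_succ (i : ℕ) (hi : i < N) :
      segProd x 0 i * segProd x (i + 1) (N - (i + 1)) = segProd x 0 N := by
    have := segProd_mul_segProd x 0 i (N - (i + 1))
    rwa [zero_add, show i + (N - (i + 1)) + 1 = N by omega] at this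
  have split (i : ℕ) (hi : i ≤ N) : segProd x 0 i * segProd x i (N - i) = segProd x 0 N := by
    rcases hi.lt_or_eq with hi | rfl
    · rw [suffix_eq i hi, ← mul_assoc, prefix_mul_self, split_succ i hi]
    · rw [Nat.sub_self, segProd, prefix_mul_self]
  exact hasIdempotentChain_of_factorization hs (x := x) (p := fun i => segProd x 0 i)
    (q := fun i => segProd x i (N - i))
    (fun i _ => by simp only [segProd_succ_right, zero_add]) suffix_eq split split_succ
    (by simp only [Nat.sub_zero]) rfl

theorem mem_core_iff (hS : Regular S) (s : S) :
    s ∈ Subsemigroup.closure {x : S | IsIdem x} ↔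
      ∃ n : ℕ, ∃ e : Fin (n + 1) → S, ∃ f : Fin n → S,
        (∀ i, IsIdem (e i)) ∧ (∀ i, IsIdem (f i)) ∧
        RRel s (e 0) ∧
        (∀ i : Fin n, LRel (e i.castSucc) (f i)) ∧
        (∀ i : Fin n, RRel (f i) (e i.succ)) ∧
        LRel (e (Fin.last n)) s ∧
        s = List.foldl (· * ·) (e 0) (List.ofFn fun i : Fin n => f i * e i.succ) := by
  constructor
  · intro hs
    obtain ⟨N, x, hx, rfl⟩ := exists_segProd_eq_of_mem_closure hs
    obtain ⟨s', hs'⟩ := hS (segProd x 0 N)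
    exact ⟨N, hasIdempotentChain_segProd hx hs'⟩
  · rintro ⟨n, e, f, he, hf, -, -, -, -, rfl⟩
    refine Subsemigroup.list_foldl_mul_mem _ (Subsemigroup.subset_closure (he 0)) ?_
    simp only [List.mem_ofFn]
    rintro _ ⟨i, rfl⟩
    exact mul_mem (Subsemigroup.subset_closure (hf i)) (Subsemigroup.subset_closure (he i.succ))
end

section
/- For idempotents e, f in a locally inverse semigroup S, setting g = f ∧ e, e₁ = e*g and f₁ = g*f, the elements e₁ and f₁ are idempotents and e*f = e₁*f₁. -/
variable {S : Type*} [Semigroup S]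

lemma loc_idem_mul (hS : LocallyInverse S) {e a b : S} (he : IsIdem e)
    (hea : e * a = a) (hae : a * e = a) (heb : e * b = b) (hbe : b * e = b)
    (ha : IsIdem a) (hb : IsIdem b) : IsIdem (a * b) := by
  obtain ⟨x, ⟨⟨hex, hxe⟩, hinv1, hinv2⟩, huniq⟩ :=
    hS.2 e he (a * b) ⟨by rw [← mul_assoc, hea], by rw [mul_assoc, hbe]⟩
  have Ha : ∀ z : S, a * (a * z) = a * z := fun z => by rw [← mul_assoc, ha]
  have Hb : ∀ z : S, b * (b * z) = b * z := fun z => by rw [← mul_assoc, hb]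
  have Hinv2 : ∀ z : S, x * (a * (b * (x * z))) = x * z := fun z => by
    have h : x * (a * (b * (x * z))) = x * (a * b) * x * z := by simp only [mul_assoc]
    rw [h, hinv2]
  have hinv1n : a * (b * (x * (a * b))) = a * b := by simpa only [mul_assoc] using hinv1
  have hinv2n : x * (a * (b * x)) = x := by simpa only [mul_assoc] using hinv2
  have key : b * x * a = x := by
    apply huniq
    refine ⟨⟨?_, ?_⟩, ?_, ?_⟩
    · simp only [mul_assoc, ← mul_assoc e b, heb]
    · simp only [mul_assoc, hae]
    · show a * b * (b * x * a) * (a * b) = a * b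
      simp only [mul_assoc]
      simp only [Hb, Ha, hinv1n]
    · show b * x * a * (a * b) * (b * x * a) = b * x * a
      simp only [mul_assoc]
      simp only [Ha, Hb, Hinv2]
  have hxx : IsIdem x := by
    show x * x = x
    have h2 : (b * x * a) * (b * x * a) = b * x * a := by
      simp only [mul_assoc]
      simp only [Hinv2]
    rw [← key]; exact h2
  obtain ⟨w, _, hwuniq⟩ := hS.2 e he x ⟨hex, hxe⟩
  have h1 : a * b = w := by
    apply hwuniq
    refine ⟨⟨by rw [← mul_assoc, hea], by rw [mul_assoc, hbe]⟩, ?_, ?_⟩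
    · show x * (a * b) * x = x
      simp only [mul_assoc]; exact hinv2n
    · show a * b * x * (a * b) = a * b
      simp only [mul_assoc]; exact hinv1n
  have h2 : x = w := hwuniq x ⟨⟨hex, hxe⟩, by rw [hxx, hxx], by rw [hxx, hxx]⟩
  rw [show a * b = x from h1.trans h2.symm]
  exact hxx

lemma loc_comm (hS : LocallyInverse S) {e a b : S} (he : IsIdem e)
    (hea : e * a = a) (hae : a * e = a) (heb : e * b = b) (hbe : b * e = b)
    (ha : IsIdem a) (hb : IsIdem b) : a * b = b * a := by
  have hab : IsIdem (a * b) := loc_idem_mul hS he hea hae heb hbe ha hb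
  have hba : IsIdem (b * a) := loc_idem_mul hS he heb hbe hea hae hb ha
  have Ha : ∀ z : S, a * (a * z) = a * z := fun z => by rw [← mul_assoc, ha]
  have Hb : ∀ z : S, b * (b * z) = b * z := fun z => by rw [← mul_assoc, hb]
  obtain ⟨w, _, hwuniq⟩ :=
    hS.2 e he (a * b) ⟨by rw [← mul_assoc, hea], by rw [mul_assoc, hbe]⟩
  have habn : a * (b * (a * b)) = a * b := by simpa only [IsIdem, mul_assoc] using hab
  have hban : b * (a * (b * a)) = b * a := by simpa only [IsIdem, mul_assoc] using hba
  have h1 : a * b = w := by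
    apply hwuniq
    refine ⟨⟨by rw [← mul_assoc, hea], by rw [mul_assoc, hbe]⟩, ?_, ?_⟩
    · show a * b * (a * b) * (a * b) = a * b
      rw [hab, hab]
    · show a * b * (a * b) * (a * b) = a * b
      rw [hab, hab]
  have h2 : b * a = w := by
    apply hwuniq
    refine ⟨⟨by rw [← mul_assoc, heb], by rw [mul_assoc, hae]⟩, ?_, ?_⟩
    · show a * b * (b * a) * (a * b) = a * b
      simp only [mul_assoc]
      simp only [Hb, Ha, habn]
    · show b * a * (a * b) * (b * a) = b * a
      simp only [mul_assoc]
      simp only [Ha, Hb, hban]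
  rw [h1, h2]

theorem ef_eq_e1f1 (hS : LocallyInverse S) (e f g : S)
    (he : IsIdem e) (hf : IsIdem f) (hg : IsSandwich f e g) :
    IsIdem (e * g) ∧ IsIdem (g * f) ∧ e * f = (e * g) * (g * f) := by
  obtain ⟨hgg, hchar⟩ := hg
  obtain ⟨hfg, hge⟩ := (hchar g hgg).mpr ⟨hgg, hgg⟩
  have He : ∀ z : S, e * (e * z) = e * z := fun z => by rw [← mul_assoc, he]
  have Hgg : ∀ z : S, g * (g * z) = g * z := fun z => by rw [← mul_assoc, hgg]
  have Hfg : ∀ z : S, f * (g * z) = g * z := fun z => by rw [← mul_assoc, hfg]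
  have Hge : ∀ z : S, g * (e * z) = g * z := fun z => by rw [← mul_assoc, hge]
  have heg : IsIdem (e * g) := by
    show e * g * (e * g) = e * g
    simp only [mul_assoc]
    rw [Hge, hgg]
  have hgf : IsIdem (g * f) := by
    show g * f * (g * f) = g * f
    simp only [mul_assoc]
    rw [Hfg, Hgg]
  refine ⟨heg, hgf, ?_⟩
  -- construct the canonical sandwich element y = f * y0 * e
  obtain ⟨y0, hy1, hy2⟩ := hS.1 (e * f)
  have Hy2 : ∀ z : S, y0 * (e * (f * (y0 * z))) = y0 * z := fun z => by
    have h : y0 * (e * (f * (y0 * z))) = y0 * (e * f) * y0 * z := by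
      simp only [mul_assoc]
    rw [h, hy2]
  have heyf : e * (f * (y0 * (e * f))) = e * f := by
    simpa only [mul_assoc] using hy1
  have hyy : IsIdem (f * y0 * e) := by
    show f * y0 * e * (f * y0 * e) = f * y0 * e
    simp only [mul_assoc]
    rw [Hy2]
  have hfy : f * (f * y0 * e) = f * y0 * e := by
    simp only [← mul_assoc]; rw [hf]
  have hye : f * y0 * e * e = f * y0 * e := by rw [mul_assoc, he]
  obtain ⟨hgy, hyg⟩ := (hchar (f * y0 * e) hyy).mp ⟨hfy, hye⟩
  -- the idempotents e*(f*y0*e) and e*g of eSe commute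
  have hey : IsIdem (e * (f * y0 * e)) := by
    show e * (f * y0 * e) * (e * (f * y0 * e)) = e * (f * y0 * e)
    have hee : e * e = e := he; simp only [mul_assoc, hee, He, Hy2]
  have comm : (e * (f * y0 * e)) * (e * g) = (e * g) * (e * (f * y0 * e)) :=
    loc_comm hS he (He _) (by have hee : e * e = e := he; simp only [mul_assoc, hee, He]) (He g)
      (by rw [mul_assoc, hge]) hey heg
  have comm' : e * (f * (y0 * (e * g))) = e * (g * (f * (y0 * e))) := by
    have l : (e * (f * y0 * e)) * (e * g) = e * (f * (y0 * (e * g))) := by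
      simp only [mul_assoc, He]
    have r : (e * g) * (e * (f * y0 * e)) = e * (g * (f * (y0 * e))) := by
      simp only [mul_assoc]
      rw [Hge]
    rw [← l, ← r, comm]
  have gyg : g * (f * (y0 * (e * g))) = g := by
    calc g * (f * (y0 * (e * g)))
        = g * (e * (f * (y0 * (e * (f * g))))) := by rw [hfg, Hge]
      _ = g * (e * (f * (y0 * (e * f))) * g) := by simp only [mul_assoc]
      _ = g * (e * f * g) := by rw [heyf]
      _ = g := by simp only [mul_assoc]; rw [hfg, Hge, hgg]
  have gy_eq : g * (f * y0 * e) = g := by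
    show g * (f * y0 * e) = g
    calc g * (f * y0 * e)
        = g * (g * (f * y0 * e)) := by rw [Hgg]
      _ = g * (e * (g * (f * (y0 * e)))) := by simp only [mul_assoc]; rw [Hge]
      _ = g * (e * (f * (y0 * (e * g)))) := by rw [← comm']
      _ = g * (f * (y0 * (e * g))) := by rw [Hge]
      _ = g := gyg
  have geq : f * y0 * e = g := hgy.symm.trans gy_eq
  calc e * f
      = e * (f * (y0 * (e * f))) := heyf.symm
    _ = e * (f * y0 * e * f) := by simp only [mul_assoc]
    _ = e * (g * f) := by rw [geq]
    _ = e * g * (g * f) := by simp only [mul_assoc]; rw [Hgg]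
end

section
/- Let S be a semigroup and let D be a D-class of S all of whose elements are idempotent. Then D is a subsemigroup of S and is a rectangular band: for all a, b ∈ D, a*b ∈ D and a*b*a = a. -/
variable {S : Type*} [Semigroup S]

lemma rrel_of {a b : S} (u v : S) (h1 : b = a * u) (h2 : a = b * v) : RRel a b := by
  ext x
  simp only [Set.mem_insert_iff, Set.mem_setOf_eq]
  constructor
  · rintro (rfl | ⟨s, rfl⟩)
    · exact Or.inr ⟨v, h2⟩
    · exact Or.inr ⟨v * s, by rw [← mul_assoc, ← h2]⟩
  · rintro (rfl | ⟨s, rfl⟩)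
    · exact Or.inr ⟨u, h1⟩
    · exact Or.inr ⟨u * s, by rw [← mul_assoc, ← h1]⟩

lemma lrel_of {a b : S} (u v : S) (h1 : b = u * a) (h2 : a = v * b) : LRel a b := by
  ext x
  simp only [Set.mem_insert_iff, Set.mem_setOf_eq]
  constructor
  · rintro (rfl | ⟨s, rfl⟩)
    · exact Or.inr ⟨v, h2⟩
    · exact Or.inr ⟨s * v, by rw [mul_assoc, ← h2]⟩
  · rintro (rfl | ⟨s, rfl⟩)
    · exact Or.inr ⟨u, h1⟩
    · exact Or.inr ⟨s * u, by rw [mul_assoc, ← h1]⟩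

lemma rrel_idem {a b : S} (h : RRel a b) (ha : IsIdem a) (hb : IsIdem b) :
    a * b = b ∧ b * a = a := by
  have hbm : b ∈ (insert a {x | ∃ s, x = a * s} : Set S) := by
    rw [h]; exact Set.mem_insert _ _
  have ham : a ∈ (insert b {x | ∃ s, x = b * s} : Set S) := by
    rw [← h]; exact Set.mem_insert _ _
  constructor
  · rcases hbm with rfl | ⟨s, rfl⟩
    · exact ha
    · rw [← mul_assoc, ha]
  · rcases ham with rfl | ⟨s, rfl⟩
    · exact hb
    · rw [← mul_assoc, hb]

lemma lrel_idem {a b : S} (h : LRel a b) (ha : IsIdem a) (hb : IsIdem b) :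
    b * a = b ∧ a * b = a := by
  have hbm : b ∈ (insert a {x | ∃ s, x = s * a} : Set S) := by
    rw [h]; exact Set.mem_insert _ _
  have ham : a ∈ (insert b {x | ∃ s, x = s * b} : Set S) := by
    rw [← h]; exact Set.mem_insert _ _
  constructor
  · rcases hbm with rfl | ⟨s, rfl⟩
    · exact ha
    · rw [mul_assoc, ha]
  · rcases ham with rfl | ⟨s, rfl⟩
    · exact hb
    · rw [mul_assoc, hb]

theorem idempotent_Dclass_rectangular_band (d : S)
    (hD : ∀ a : S, DRel a d → IsIdem a) :
    ∀ a b : S, DRel a d → DRel b d → DRel (a * b) d ∧ a * b * a = a := by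
  intro a b hadD hbdD
  obtain ⟨ca, hRa, hLa⟩ := hadD
  obtain ⟨cb, hRb, hLb⟩ := hbdD
  have ha : IsIdem a := hD a ⟨ca, hRa, hLa⟩
  have hca : IsIdem ca := hD ca ⟨ca, rfl, hLa⟩
  have hb : IsIdem b := hD b ⟨cb, hRb, hLb⟩
  have hcb : IsIdem cb := hD cb ⟨cb, rfl, hLb⟩
  obtain ⟨haca, hcaa⟩ := rrel_idem hRa ha hca
  obtain ⟨hbcb, hcbb⟩ := rrel_idem hRb hb hcb
  have hLab : LRel ca cb := Eq.trans hLa (Eq.symm hLb)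
  obtain ⟨hcbca, hcacb⟩ := lrel_idem hLab hca hcb
  -- the intermediate element c = ca * b
  set c := ca * b with hc_def
  have hRcac : RRel ca c :=
    rrel_of b cb rfl (by rw [hc_def, mul_assoc, hbcb, hcacb])
  have hLcb : LRel c b :=
    lrel_of cb ca (by rw [hc_def, ← mul_assoc, hcbca, hcbb]) hc_def
  have hc : IsIdem c := hD c ⟨ca, Eq.symm hRcac, hLa⟩
  have hRac : RRel a c := Eq.trans hRa hRcac
  obtain ⟨hac, hca'⟩ := rrel_idem hRac ha hc
  obtain ⟨hbc, hcb'⟩ := lrel_idem hLcb hc hb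
  -- b * a is in the D-class
  have hLba : LRel (b * a) a :=
    lrel_of c b (by rw [← mul_assoc, hcb', hca']) rfl
  have hRba : RRel (b * a) b :=
    rrel_of c a (by rw [mul_assoc, hac, hbc]) rfl
  have hba : IsIdem (b * a) := hD (b * a) ⟨cb, Eq.trans hRba hRb, hLb⟩
  obtain ⟨haba, hbaa⟩ := lrel_idem hLba hba ha
  have key : a * b * a = a := by rw [mul_assoc]; exact haba
  refine ⟨⟨ca, Eq.trans (rrel_of a b key.symm rfl) hRa, hLa⟩, key⟩
end
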